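/- arXiv:1505.07621 — 3 statements merged into one kernel-verified Lean document; each statement's English description precedes it below -/
import Mathlib

section
/- The tensor-product five-point mixed-derivative formula is fourth-order accurate: for u : ℝ² → ℝ of class C^6 with bounded sixth-order partial derivatives, the quantity (1 - (h²/6)δ²_x)δ_{x0}(1 - (h²/6)δ²_y)δ_{y0} u(x,y) approximates ∂²u/∂x∂y (x,y) with error O(h^4), i.e. bounded by C·h^4 times a bound on the derivatives of u of order up to 6, for some constant C. -/
/-!
In each variable, `(1 - h²/6 δ²) δ₀` is the five-point stencil `D = centralDiff4 h`,
`D g a = (-g (a + 2h) + 8 g (a + h) - 8 g (a - h) + g (a - 2h)) / (12h)`, so the formula is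
`Dˣ Dʸ u`. In one variable, Taylor's theorem gives `|D g - g'| ≤ sup |g⁽⁵⁾| h⁴ / 18`, and the mean
value theorem gives `|D g| ≤ 5/3 sup |g'|`. Write
`Dˣ Dʸ u - ∂ₓ∂ᵧ u = Dˣ (Dʸ u - ∂ᵧ u) + (Dˣ - ∂ₓ) ∂ᵧ u`.
The second term is the one-variable estimate for `∂ᵧ u (·, y)`. For the first, by the symmetry of
second derivatives the x-derivative of `Dʸ u - ∂ᵧ u` is `Dʸ ∂ₓ u - ∂ᵧ ∂ₓ u`, which is again
`O(h⁴)` by the one-variable estimate, applied to `∂ₓ u (x, ·)`.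
-/

open Finset
open scoped Nat

noncomputable def centralDiff4 (h : ℝ) (g : ℝ → ℝ) (a : ℝ) : ℝ :=
  (-g (a + 2 * h) + 8 * g (a + h) - 8 * g (a - h) + g (a - 2 * h)) / (12 * h)

theorem centralDiff4_sub (h : ℝ) (f g : ℝ → ℝ) (a : ℝ) :
    centralDiff4 h (fun t => f t - g t) a = centralDiff4 h f a - centralDiff4 h g a := by
  simp only [centralDiff4]
  ring

theorem hasDerivAt_centralDiff4 {F : ℝ → ℝ → ℝ} {F' : ℝ → ℝ} {s : ℝ}
    (hF : ∀ t, HasDerivAt (fun s => F s t) (F' t) s) (h a : ℝ) :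
    HasDerivAt (fun s => centralDiff4 h (F s) a) (centralDiff4 h F' a) s := by
  unfold centralDiff4
  exact ((((hF _).neg.add ((hF _).const_mul 8)).sub ((hF _).const_mul 8)).add
    (hF _)).div_const _

theorem abs_sub_taylor_le {g : ℝ → ℝ} {n : ℕ} (hg : ContDiff ℝ (n + 1) g) {K : ℝ}
    (hK : ∀ t, |iteratedDeriv (n + 1) g t| ≤ K) (a s : ℝ) :
    |g (a + s) - ∑ k ∈ range (n + 1), iteratedDeriv k g a * s ^ k / (k !)|
      ≤ K * |s| ^ (n + 1) / (n + 1)! := by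
  rcases eq_or_ne s 0 with rfl | hs
  · simp [sum_range_succ']
  obtain ⟨t, -, ht⟩ := taylor_mean_remainder_lagrange_iteratedDeriv
    (x₀ := a) (x := a + s) (by simpa using hs) hg.contDiffOn
  have htaylor : taylorWithinEval g n (Set.uIcc a (a + s)) a (a + s)
      = ∑ k ∈ range (n + 1), iteratedDeriv k g a * s ^ k / (k !) := by
    rw [taylor_within_apply]
    refine sum_congr rfl fun k hk => ?_
    rw [iteratedDerivWithin_eq_iteratedDeriv (uniqueDiffOn_uIcc (by simpa using hs))
      (hg.contDiffAt.of_le (by exact_mod_cast (mem_range.1 hk).le)) Set.left_mem_uIcc,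
      add_sub_cancel_left, smul_eq_mul]
    ring
  rw [← htaylor, ht, add_sub_cancel_left, abs_div, abs_mul, abs_pow, Nat.abs_cast]
  gcongr
  exact hK t

theorem abs_centralDiff4_le {g : ℝ → ℝ} (hg : Differentiable ℝ g) {K : ℝ}
    (hK : ∀ t, |deriv g t| ≤ K) (h a : ℝ) : |centralDiff4 h g a| ≤ 5 / 3 * K := by
  have hK0 : 0 ≤ K := (abs_nonneg _).trans (hK a)
  rcases eq_or_ne h 0 with rfl | hh
  · simp [centralDiff4, hK0]
  have hlip : ∀ b c, |g b - g c| ≤ K * |b - c| := fun b c => by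
    simpa [Real.norm_eq_abs] using Convex.norm_image_sub_le_of_norm_deriv_le
      (fun x _ => hg x) (fun x _ => hK x) convex_univ (Set.mem_univ c) (Set.mem_univ b)
  have h1 := hlip (a + h) (a - h)
  have h2 := hlip (a + 2 * h) (a - 2 * h)
  rw [show a + h - (a - h) = 2 * h by ring, abs_mul, abs_two] at h1
  rw [show a + 2 * h - (a - 2 * h) = 4 * h by ring, abs_mul,
    abs_of_pos (by norm_num : (0 : ℝ) < 4)] at h2
  have hnum : |8 * (g (a + h) - g (a - h)) - (g (a + 2 * h) - g (a - 2 * h))| ≤ 20 * K * |h| :=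
    calc _ ≤ |8 * (g (a + h) - g (a - h))| + |g (a + 2 * h) - g (a - 2 * h)| := abs_sub _ _
      _ ≤ 20 * K * |h| := by rw [abs_mul, abs_of_pos (by norm_num : (0 : ℝ) < 8)]; linarith
  rw [centralDiff4, abs_div, div_le_iff₀ (by positivity), abs_mul,
    abs_of_pos (by norm_num : (0 : ℝ) < 12)]
  rw [show -g (a + 2 * h) + 8 * g (a + h) - 8 * g (a - h) + g (a - 2 * h)
    = 8 * (g (a + h) - g (a - h)) - (g (a + 2 * h) - g (a - 2 * h)) by ring]
  linarith

theorem abs_centralDiff4_sub_deriv_le {g : ℝ → ℝ} (hg : ContDiff ℝ 5 g) {K : ℝ}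
    (hK : ∀ t, |iteratedDeriv 5 g t| ≤ K) {h : ℝ} (hh : h ≠ 0) (a : ℝ) :
    |centralDiff4 h g a - deriv g a| ≤ K * h ^ 4 / 18 := by
  set R : ℝ → ℝ := fun s => g (a + s) - ∑ k ∈ range 5, iteratedDeriv k g a * s ^ k / (k !)
  have hR : ∀ s, |R s| ≤ K * |s| ^ 5 / 120 := fun s => abs_sub_taylor_le (n := 4) hg hK a s
  -- the stencil differentiates quartics exactly, so only the Taylor remainders survive
  have hsplit : centralDiff4 h g a - deriv g a
      = (8 * (R h - R (-h)) - (R (2 * h) - R (-(2 * h)))) / (12 * h) := by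
    simp only [R, centralDiff4, sum_range_succ, sum_range_zero, iteratedDeriv_one,
      ← sub_eq_add_neg]
    norm_num [Nat.factorial]
    field_simp
    ring
  have h1 := hR h
  have h2 := hR (-h)
  have h3 := hR (2 * h)
  have h4 := hR (-(2 * h))
  simp only [abs_neg, abs_mul, abs_two] at h2 h3 h4
  have hnum : |8 * (R h - R (-h)) - (R (2 * h) - R (-(2 * h)))| ≤ 2 / 3 * K * |h| ^ 5 := by
    rw [abs_le] at h1 h2 h3 h4 ⊢
    constructor <;> nlinarith [h1, h2, h3, h4]
  rw [hsplit, abs_div, div_le_iff₀ (by positivity), abs_mul,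
    abs_of_pos (by norm_num : (0 : ℝ) < 12), ← Even.pow_abs ⟨2, rfl⟩ h]
  linarith

section

variable {E F : Type*} [NormedAddCommGroup E] [NormedSpace ℝ E]
  [NormedAddCommGroup F] [NormedSpace ℝ F]

theorem norm_iteratedDeriv_comp_line_le {f : E → F} {n : WithTop ℕ∞} (hf : ContDiff ℝ n f)
    {k : ℕ} (hk : k ≤ n) (p v : E) (t : ℝ) :
    ‖iteratedDeriv k (fun t => f (p + t • v)) t‖
      ≤ ‖iteratedFDeriv ℝ k f (p + t • v)‖ * ‖v‖ ^ k := by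
  have hline : (fun t : ℝ => f (p + t • v))
      = (fun q => f (p + q)) ∘ ContinuousLinearMap.smulRight (1 : ℝ →L[ℝ] ℝ) v := by
    ext t; simp
  have hshift : ContDiff ℝ n (fun q => f (p + q)) := hf.comp (contDiff_const.add contDiff_id)
  rw [← norm_iteratedFDeriv_eq_norm_iteratedDeriv, hline,
    ContinuousLinearMap.iteratedFDeriv_comp_right _ hshift t hk, iteratedFDeriv_comp_add_left]
  refine (ContinuousMultilinearMap.norm_compContinuousLinearMap_le _ _).trans_eq ?_
  simp [ContinuousLinearMap.norm_smulRight_apply]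

theorem abs_centralDiff4_comp_line_sub_deriv_le {g : E → ℝ} (hg : ContDiff ℝ 5 g) {K : ℝ}
    (hK : ∀ p, ‖iteratedFDeriv ℝ 5 g p‖ ≤ K) {v : E} (hv : ‖v‖ ≤ 1) {h : ℝ} (hh : h ≠ 0) (p : E) (a : ℝ) :
    |centralDiff4 h (fun t => g (p + t • v)) a - deriv (fun t => g (p + t • v)) a|
      ≤ K * h ^ 4 / 18 := by
  refine abs_centralDiff4_sub_deriv_le
    (hg.comp (contDiff_const.add (contDiff_id.smul contDiff_const))) (fun t => ?_) hh a
  calc _ ≤ ‖iteratedFDeriv ℝ 5 g (p + t • v)‖ * ‖v‖ ^ 5 :=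
        norm_iteratedDeriv_comp_line_le hg le_rfl p v t
    _ ≤ K :=
      (mul_le_of_le_one_right (norm_nonneg _) (pow_le_one₀ (norm_nonneg v) hv)).trans (hK _)

theorem norm_iteratedFDeriv_fderiv_apply_le {f : E → F} {n : WithTop ℕ∞} (hf : ContDiff ℝ n f)
    {i : ℕ} (hi : i + 1 ≤ n) (v p : E) :
    ‖iteratedFDeriv ℝ i (fun q => fderiv ℝ f q v) p‖ ≤ ‖iteratedFDeriv ℝ (i + 1) f p‖ * ‖v‖ := by
  have happly : (fun q => fderiv ℝ f q v) = ContinuousLinearMap.apply ℝ F v ∘ fderiv ℝ f := rfl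
  rw [happly,
    ContinuousLinearMap.iteratedFDeriv_comp_left _ (hf.fderiv_right hi).contDiffAt le_rfl,
    ← norm_iteratedFDeriv_fderiv, mul_comm]
  refine (ContinuousLinearMap.norm_compContinuousMultilinearMap_le _ _).trans ?_
  gcongr
  exact ContinuousLinearMap.opNorm_le_bound _ (norm_nonneg v) fun L => by
    simpa [mul_comm] using L.le_opNorm v

theorem fderiv_fderiv_apply_comm {f : E → F} {p : E} (hf : ContDiffAt ℝ 2 f p) (v w : E) :
    fderiv ℝ (fun q => fderiv ℝ f q v) p w = fderiv ℝ (fun q => fderiv ℝ f q w) p v := by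
  have hdiff : DifferentiableAt ℝ (fderiv ℝ f) p :=
    (hf.fderiv_right (m := 1) le_rfl).differentiableAt one_ne_zero
  rw [fderiv_clm_apply hdiff (differentiableAt_const v),
    fderiv_clm_apply hdiff (differentiableAt_const w)]
  simpa using (hf.isSymmSndFDerivAt (by simp)) w v

end

section

variable {F : Type*} [NormedAddCommGroup F] [NormedSpace ℝ F] {f : ℝ × ℝ → F} {s t : ℝ}

theorem DifferentiableAt.hasDerivAt_comp_prodMk_left (hf : DifferentiableAt ℝ f (s, t)) :
    HasDerivAt (fun s => f (s, t)) (fderiv ℝ f (s, t) (1, 0)) s :=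
  hf.hasFDerivAt.comp_hasDerivAt s ((hasDerivAt_id s).prodMk (hasDerivAt_const s t))

theorem DifferentiableAt.hasDerivAt_comp_prodMk_right (hf : DifferentiableAt ℝ f (s, t)) :
    HasDerivAt (fun t => f (s, t)) (fderiv ℝ f (s, t) (0, 1)) t :=
  hf.hasFDerivAt.comp_hasDerivAt t ((hasDerivAt_const t s).prodMk (hasDerivAt_id t))

end

theorem hasDerivAt_centralDiff4_sub_deriv {u : ℝ × ℝ → ℝ} (hu : ContDiff ℝ 2 u) (h y s : ℝ) :
    HasDerivAt (fun s => centralDiff4 h (fun t => u (s, t)) y - deriv (fun t => u (s, t)) y)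
      (centralDiff4 h (fun t => fderiv ℝ u (s, t) (1, 0)) y
        - deriv (fun t => fderiv ℝ u (s, t) (1, 0)) y) s := by
  have hu1 : Differentiable ℝ u := hu.differentiable (by norm_num)
  have hpartial (v : ℝ × ℝ) : Differentiable ℝ (fun q => fderiv ℝ u q v) :=
    ((hu.fderiv_right (m := 1) le_rfl).clm_apply contDiff_const).differentiable one_ne_zero
  have hG : HasDerivAt (fun s => deriv (fun t => u (s, t)) y)
      (fderiv ℝ (fun q => fderiv ℝ u q (0, 1)) (s, y) (1, 0)) s := by
    rw [funext fun s => (hu1 (s, y)).hasDerivAt_comp_prodMk_right.deriv]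
    exact (hpartial (0, 1) _).hasDerivAt_comp_prodMk_left
  rw [((hpartial (1, 0) _).hasDerivAt_comp_prodMk_right).deriv,
    ← fderiv_fderiv_apply_comm hu.contDiffAt]
  exact (hasDerivAt_centralDiff4 (fun t => (hu1 _).hasDerivAt_comp_prodMk_left) h y).sub hG

theorem abs_centralDiff4_centralDiff4_sub_deriv_deriv_le {u : ℝ × ℝ → ℝ} {M : ℝ}
    (hu : ContDiff ℝ 6 u) (hM : ∀ p, ‖iteratedFDeriv ℝ 6 u p‖ ≤ M) {h : ℝ} (hh : h ≠ 0)
    (x y : ℝ) :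
    |centralDiff4 h (fun s => centralDiff4 h (fun t => u (s, t)) y) x
      - deriv (fun s => deriv (fun t => u (s, t)) y) x| ≤ 4 / 27 * M * h ^ 4 := by
  have hpartial (v : ℝ × ℝ) (hv : ‖v‖ ≤ 1) : ContDiff ℝ 5 (fun q => fderiv ℝ u q v) ∧
      ∀ p, ‖iteratedFDeriv ℝ 5 (fun q => fderiv ℝ u q v) p‖ ≤ M :=
    ⟨(hu.fderiv_right (m := 5) (by norm_num)).clm_apply contDiff_const, fun p =>
      (norm_iteratedFDeriv_fderiv_apply_le hu (by norm_num) v p).trans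
        ((mul_le_of_le_one_right (norm_nonneg _) hv).trans (hM p))⟩
  obtain ⟨hu₁, hu₁M⟩ := hpartial (1, 0) (by simp)
  obtain ⟨hu₂, hu₂M⟩ := hpartial (0, 1) (by simp)
  have hW := hasDerivAt_centralDiff4_sub_deriv (hu.of_le (by norm_num)) h y
  have hWx := abs_centralDiff4_le (fun s => (hW s).differentiableAt) (fun s => by
    rw [(hW s).deriv]
    simpa using
      abs_centralDiff4_comp_line_sub_deriv_le hu₁ hu₁M (v := (0, 1)) (by simp) hh (s, 0) y) h x
  have hG : (fun s => deriv (fun t => u (s, t)) y) = fun s => fderiv ℝ u (s, y) (0, 1) :=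
    funext fun s => ((hu.differentiable (by norm_num)) (s, y)).hasDerivAt_comp_prodMk_right.deriv
  have hGx := abs_centralDiff4_comp_line_sub_deriv_le hu₂ hu₂M (v := (1, 0)) (by simp) hh (0, y) x
  simp only [Prod.smul_mk, Prod.mk_add_mk, smul_eq_mul, mul_one, mul_zero, zero_add, add_zero,
    ← hG] at hGx
  rw [centralDiff4_sub] at hWx
  exact (abs_sub_le _ _ _).trans ((add_le_add hWx hGx).trans_eq (by ring))

/-- The tensor-product five-point mixed-derivative formula is fourth-order accurate. -/
theorem mixed_derivative_formula_fourth_order :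
    ∃ C : ℝ, 0 < C ∧ ∀ (u : ℝ × ℝ → ℝ) (x y h M : ℝ), 0 < h →
      ContDiff ℝ 6 u →
      (∀ i : ℕ, i ≤ 6 → ∀ p : ℝ × ℝ, ‖iteratedFDeriv ℝ i u p‖ ≤ M) →
      (let dy0 : (ℝ × ℝ → ℝ) → ℝ × ℝ → ℝ :=
          fun w p => (w (p.1, p.2 + h) - w (p.1, p.2 - h)) / (2 * h)
       let d2y : (ℝ × ℝ → ℝ) → ℝ × ℝ → ℝ :=
          fun w p => (w (p.1, p.2 + h) - 2 * w p + w (p.1, p.2 - h)) / h ^ 2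
       let dx0 : (ℝ × ℝ → ℝ) → ℝ × ℝ → ℝ :=
          fun w p => (w (p.1 + h, p.2) - w (p.1 - h, p.2)) / (2 * h)
       let d2x : (ℝ × ℝ → ℝ) → ℝ × ℝ → ℝ :=
          fun w p => (w (p.1 + h, p.2) - 2 * w p + w (p.1 - h, p.2)) / h ^ 2
       let v : ℝ × ℝ → ℝ := fun p => dy0 u p - h ^ 2 / 6 * d2y (dy0 u) p
       |dx0 v (x, y) - h ^ 2 / 6 * d2x (dx0 v) (x, y)
          - deriv (fun s => deriv (fun t => u (s, t)) y) x| ≤ C * h ^ 4 * M) := by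
  refine ⟨4 / 27, by norm_num, fun u x y h M hh hu hM => ?_⟩
  intro dy0 d2y dx0 d2x v
  have hstencil : dx0 v (x, y) - h ^ 2 / 6 * d2x (dx0 v) (x, y)
      = centralDiff4 h (fun s => centralDiff4 h (fun t => u (s, t)) y) x := by
    simp only [dx0, d2x, v, dy0, d2y, centralDiff4, add_sub_cancel_right, sub_add_cancel,
      add_assoc, sub_sub, ← two_mul]
    field_simp
    ring
  rw [hstencil]
  exact (abs_centralDiff4_centralDiff4_sub_deriv_deriv_le hu (hM 6 le_rfl) hh.ne' x y).trans_eq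
    (by ring)
end

section
/- HOC consistency: let d > 0, c ∈ ℝ, and let u be C^6 with bounded sixth derivative and g C^4 with bounded fourth derivative satisfying d·u'' + c·u' = g. Then the residual of the compact scheme, namely d·δ²_h u(x) + c·δ_{0h} u(x) + (h²/12)(c²/d)·δ²_h u(x) − g(x) − (h²/12)[(c/d)·δ_{0h} g(x) + δ²_h g(x)], is O(h^4), i.e. bounded by C·h^4 with C depending only on c, d, and bounds on derivatives of u and g. -/
/-!
By Taylor's theorem with Lagrange remainder, `δ²_h v = v'' + h²/12 v⁽⁴⁾ + O(h⁴)` and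
`δ_{0h} v = v' + h²/6 v''' + O(h⁴)`, so the `h²` truncation error of `d δ²_h u + c δ_{0h} u` is
`h²/12 (d u⁽⁴⁾ + 2c u''')`. Differentiating the equation gives
`(c/d) g' + g'' = d u⁽⁴⁾ + 2c u''' + (c²/d) u''`, so the compact correction terms cancel this error
up to `O(h⁴)`. The bound is uniform in `h > 0`, so inside the correction terms, which already
carry a factor `h²`, only the second-order estimates `δ²_h v = v'' + O(h²)` and
`δ_{0h} v = v' + O(h²)` are used.
-/

open Finset Nat Set

noncomputable def taylorRemainder (v : ℝ → ℝ) (n : ℕ) (x t : ℝ) : ℝ :=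
  v (x + t) - ∑ k ∈ range n, iteratedDeriv k v x * t ^ k / k !

theorem taylorWithinEval_uIcc_eq_sum {v : ℝ → ℝ} {n : ℕ} (hv : ContDiff ℝ n v) {x t : ℝ}
    (ht : t ≠ 0) :
    taylorWithinEval v n (uIcc x (x + t)) x (x + t) =
      ∑ k ∈ range (n + 1), iteratedDeriv k v x * t ^ k / k ! := by
  rw [taylor_within_apply]
  refine sum_congr rfl fun k hk => ?_
  rw [iteratedDerivWithin_eq_iteratedDeriv (uniqueDiffOn_uIcc (by simpa using ht))
    (hv.contDiffAt.of_le (by exact_mod_cast Nat.lt_succ_iff.mp (mem_range.mp hk)))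
    left_mem_uIcc, smul_eq_mul, add_sub_cancel_left]
  ring

theorem abs_taylorRemainder_le {v : ℝ → ℝ} {n : ℕ} {M : ℝ} (hv : ContDiff ℝ n v)
    (hM : ∀ y, |iteratedDeriv n v y| ≤ M) (x t : ℝ) :
    |taylorRemainder v n x t| ≤ M * |t| ^ n / n ! := by
  cases n with
  | zero => simpa [taylorRemainder] using hM (x + t)
  | succ n =>
    rcases eq_or_ne t 0 with rfl | ht
    · simp [taylorRemainder, sum_range_succ']
    obtain ⟨y, -, hy⟩ := taylor_mean_remainder_lagrange_iteratedDeriv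
      (f := v) (x₀ := x) (x := x + t) (n := n) (by simpa using ht) hv.contDiffOn
    rw [taylorWithinEval_uIcc_eq_sum (hv.of_le (by exact_mod_cast n.le_succ)) ht,
      add_sub_cancel_left] at hy
    rw [taylorRemainder, hy, abs_div, abs_mul, abs_pow, Nat.abs_cast]
    gcongr
    exact hM y

theorem abs_taylorRemainder_add_abs_neg_le {v : ℝ → ℝ} {n : ℕ} {M : ℝ} (hv : ContDiff ℝ n v)
    (hM : ∀ y, |iteratedDeriv n v y| ≤ M) (x h : ℝ) :
    |taylorRemainder v n x h| + |taylorRemainder v n x (-h)| ≤ 2 * (M * |h| ^ n / n !) := by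
  have hneg := abs_taylorRemainder_le hv hM x (-h)
  rw [abs_neg] at hneg
  exact two_mul (M * |h| ^ n / n !) ▸ add_le_add (abs_taylorRemainder_le hv hM x h) hneg

noncomputable def centralDiff (h : ℝ) (v : ℝ → ℝ) (x : ℝ) : ℝ := (v (x + h) - v (x - h)) / (2 * h)

noncomputable def secondDiff (h : ℝ) (v : ℝ → ℝ) (x : ℝ) : ℝ :=
  (v (x + h) - 2 * v x + v (x - h)) / h ^ 2

section DifferenceQuotients

variable {v : ℝ → ℝ} {M h : ℝ} (x : ℝ)

theorem abs_centralDiff_sub_le_sq (hv : ContDiff ℝ 3 v) (hM : ∀ y, |iteratedDeriv 3 v y| ≤ M)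
    (hh : h ≠ 0) :
    |centralDiff h v x - deriv v x| ≤ M / 6 * h ^ 2 := by
  have key : centralDiff h v x - deriv v x =
      (taylorRemainder v 3 x h - taylorRemainder v 3 x (-h)) / (2 * h) := by
    simp only [centralDiff, taylorRemainder, sum_range_succ, sum_range_zero, iteratedDeriv_zero,
      iteratedDeriv_one, sub_eq_add_neg]
    field_simp
    ring
  rw [key, abs_div, div_le_iff₀ (by positivity)]
  refine (abs_sub _ _).trans ((abs_taylorRemainder_add_abs_neg_le hv hM x h).trans_eq ?_)
  rw [abs_mul, abs_two, pow_succ |h| 2, sq_abs]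
  norm_num [factorial]
  ring

theorem abs_centralDiff_sub_le_pow_four (hv : ContDiff ℝ 5 v)
    (hM : ∀ y, |iteratedDeriv 5 v y| ≤ M) (hh : h ≠ 0) :
    |centralDiff h v x - (deriv v x + h ^ 2 / 6 * iteratedDeriv 3 v x)| ≤ M / 120 * h ^ 4 := by
  have key : centralDiff h v x - (deriv v x + h ^ 2 / 6 * iteratedDeriv 3 v x) =
      (taylorRemainder v 5 x h - taylorRemainder v 5 x (-h)) / (2 * h) := by
    simp only [centralDiff, taylorRemainder, sum_range_succ, sum_range_zero, iteratedDeriv_zero,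
      iteratedDeriv_one, sub_eq_add_neg]
    field_simp
    ring
  rw [key, abs_div, div_le_iff₀ (by positivity)]
  refine (abs_sub _ _).trans ((abs_taylorRemainder_add_abs_neg_le hv hM x h).trans_eq ?_)
  rw [abs_mul, abs_two, pow_succ |h| 4, Even.pow_abs ⟨2, rfl⟩]
  norm_num [factorial]
  ring

theorem abs_secondDiff_sub_le_sq (hv : ContDiff ℝ 4 v) (hM : ∀ y, |iteratedDeriv 4 v y| ≤ M)
    (hh : h ≠ 0) :
    |secondDiff h v x - iteratedDeriv 2 v x| ≤ M / 12 * h ^ 2 := by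
  have key : secondDiff h v x - iteratedDeriv 2 v x =
      (taylorRemainder v 4 x h + taylorRemainder v 4 x (-h)) / h ^ 2 := by
    simp only [secondDiff, taylorRemainder, sum_range_succ, sum_range_zero, iteratedDeriv_zero,
      sub_eq_add_neg]
    field_simp
    ring
  rw [key, abs_div, div_le_iff₀ (by positivity)]
  refine (abs_add_le _ _).trans ((abs_taylorRemainder_add_abs_neg_le hv hM x h).trans_eq ?_)
  rw [Even.pow_abs ⟨2, rfl⟩, abs_pow, sq_abs]
  norm_num [factorial]
  ring

theorem abs_secondDiff_sub_le_pow_four (hv : ContDiff ℝ 6 v) (hM : ∀ y, |iteratedDeriv 6 v y| ≤ M)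
    (hh : h ≠ 0) :
    |secondDiff h v x - (iteratedDeriv 2 v x + h ^ 2 / 12 * iteratedDeriv 4 v x)|
      ≤ M / 360 * h ^ 4 := by
  have key : secondDiff h v x - (iteratedDeriv 2 v x + h ^ 2 / 12 * iteratedDeriv 4 v x) =
      (taylorRemainder v 6 x h + taylorRemainder v 6 x (-h)) / h ^ 2 := by
    simp only [secondDiff, taylorRemainder, sum_range_succ, sum_range_zero, iteratedDeriv_zero,
      sub_eq_add_neg]
    field_simp
    ring
  rw [key, abs_div, div_le_iff₀ (by positivity)]
  refine (abs_add_le _ _).trans ((abs_taylorRemainder_add_abs_neg_le hv hM x h).trans_eq ?_)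
  rw [Even.pow_abs ⟨3, rfl⟩, abs_pow, sq_abs]
  norm_num [factorial]
  ring

end DifferenceQuotients

theorem iteratedDeriv_eq_of_ode {u g : ℝ → ℝ} {c d : ℝ} {k : ℕ} (hu : ContDiff ℝ (k + 2) u)
    (hode : ∀ y, d * iteratedDeriv 2 u y + c * deriv u y = g y) (x : ℝ) :
    iteratedDeriv k g x = d * iteratedDeriv (k + 2) u x + c * iteratedDeriv (k + 1) u x := by
  have hg : g = fun y => d * deriv^[2] u y + c * deriv^[1] u y := by
    funext y
    rw [← hode, iteratedDeriv_eq_iterate, Function.iterate_one]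
  have hu2 : ContDiff ℝ k (deriv^[2] u) := hu.iterate_deriv' k 2
  have hu1 : ContDiff ℝ k (deriv^[1] u) := (hu.of_le (by norm_cast; omega)).iterate_deriv' k 1
  rw [hg, iteratedDeriv_fun_add (contDiffAt_const.mul hu2.contDiffAt)
    (contDiffAt_const.mul hu1.contDiffAt), iteratedDeriv_const_mul_field,
    iteratedDeriv_const_mul_field]
  simp only [iteratedDeriv_eq_iterate, ← Function.iterate_add_apply]

theorem hoc_residual_eq {u g : ℝ → ℝ} {c d : ℝ} (hd : d ≠ 0) (hu : ContDiff ℝ 4 u)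
    (hode : ∀ y, d * iteratedDeriv 2 u y + c * deriv u y = g y) (h x : ℝ) :
    d * secondDiff h u x + c * centralDiff h u x + h ^ 2 / 12 * (c ^ 2 / d) * secondDiff h u x
        - g x - h ^ 2 / 12 * ((c / d) * centralDiff h g x + secondDiff h g x) =
      d * (secondDiff h u x - (iteratedDeriv 2 u x + h ^ 2 / 12 * iteratedDeriv 4 u x))
        + c * (centralDiff h u x - (deriv u x + h ^ 2 / 6 * iteratedDeriv 3 u x))
        + h ^ 2 / 12 * (c ^ 2 / d) * (secondDiff h u x - iteratedDeriv 2 u x)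
        - h ^ 2 / 12 * ((c / d) * (centralDiff h g x - deriv g x)
          + (secondDiff h g x - iteratedDeriv 2 g x)) := by
  have hg1 := iteratedDeriv_eq_of_ode (k := 1) (hu.of_le (by norm_num)) hode x
  have hg2 := iteratedDeriv_eq_of_ode (k := 2) hu hode x
  rw [iteratedDeriv_one] at hg1
  linear_combination (norm := skip) hode x - h ^ 2 / 12 * (c / d) * hg1 - h ^ 2 / 12 * hg2
  field_simp
  ring

theorem abs_hoc_residual_le {c d h A B E F G a b e f g : ℝ} (hd : 0 < d) (hA : |A| ≤ a)
    (hB : |B| ≤ b) (hE : |E| ≤ e) (hF : |F| ≤ f) (hG : |G| ≤ g) :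
    |d * A + c * B + h ^ 2 / 12 * (c ^ 2 / d) * E - h ^ 2 / 12 * ((c / d) * F + G)|
      ≤ d * a + |c| * b + h ^ 2 / 12 * (c ^ 2 / d) * e + h ^ 2 / 12 * (|c| / d * f + g) := by
  have hk : 0 ≤ h ^ 2 / 12 := by positivity
  have hF' : |c / d * F| ≤ |c| / d * f := by
    rw [abs_mul, abs_div, abs_of_pos hd]
    gcongr
  calc _ ≤ |d * A| + |c * B| + |h ^ 2 / 12 * (c ^ 2 / d) * E| + |h ^ 2 / 12 * (c / d * F + G)| :=
        (abs_sub _ _).trans (add_le_add_left (abs_add_three _ _ _) _)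
    _ = d * |A| + |c| * |B| + h ^ 2 / 12 * (c ^ 2 / d) * |E| + h ^ 2 / 12 * |c / d * F + G| := by
        rw [abs_mul d, abs_mul c, abs_mul _ E, abs_mul _ (_ + G), abs_of_pos hd,
          abs_of_nonneg (by positivity : 0 ≤ h ^ 2 / 12 * (c ^ 2 / d)), abs_of_nonneg hk]
    _ ≤ _ := by
        gcongr
        exact (abs_add_le _ _).trans (add_le_add hF' hG)

/-- Fourth-order consistency of the high-order compact (HOC) scheme. -/
theorem hoc_scheme_fourth_order_consistency
    (c d Mu Mg : ℝ) (hd : 0 < d) :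
    ∃ C : ℝ, 0 < C ∧ ∀ (u g : ℝ → ℝ) (x h : ℝ), 0 < h →
      ContDiff ℝ 6 u → ContDiff ℝ 4 g →
      (∀ i : ℕ, i ≤ 6 → ∀ y : ℝ, |iteratedDeriv i u y| ≤ Mu) →
      (∀ i : ℕ, i ≤ 4 → ∀ y : ℝ, |iteratedDeriv i g y| ≤ Mg) →
      (∀ y : ℝ, d * iteratedDeriv 2 u y + c * deriv u y = g y) →
      (let d0 : (ℝ → ℝ) → ℝ → ℝ := fun v t => (v (t + h) - v (t - h)) / (2 * h)
       let d2 : (ℝ → ℝ) → ℝ → ℝ := fun v t => (v (t + h) - 2 * v t + v (t - h)) / h ^ 2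
       |d * d2 u x + c * d0 u x + h ^ 2 / 12 * (c ^ 2 / d) * d2 u x
          - g x - h ^ 2 / 12 * ((c / d) * d0 g x + d2 g x)| ≤ C * h ^ 4) := by
  set K := d * |Mu| / 360 + |c| * |Mu| / 120 + c ^ 2 / d * |Mu| / 144 + |c| / d * |Mg| / 72
    + |Mg| / 144
  refine ⟨K + 1, by positivity, fun u g x h hh hu hg hbu hbg hode => ?_⟩
  have hMu (i : ℕ) (hi : i ≤ 6) (y : ℝ) := (hbu i hi y).trans (le_abs_self Mu)
  have hMg (i : ℕ) (hi : i ≤ 4) (y : ℝ) := (hbg i hi y).trans (le_abs_self Mg)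
  have eu6 := abs_secondDiff_sub_le_pow_four x hu (hMu 6 le_rfl) hh.ne'
  have eu5 :=
    abs_centralDiff_sub_le_pow_four x (hu.of_le (by norm_num)) (hMu 5 (by norm_num)) hh.ne'
  have eu4 := abs_secondDiff_sub_le_sq x (hu.of_le (by norm_num)) (hMu 4 (by norm_num)) hh.ne'
  have eg3 := abs_centralDiff_sub_le_sq x (hg.of_le (by norm_num)) (hMg 3 (by norm_num)) hh.ne'
  have eg4 := abs_secondDiff_sub_le_sq x hg (hMg 4 le_rfl) hh.ne'
  show |d * secondDiff h u x + c * centralDiff h u x + h ^ 2 / 12 * (c ^ 2 / d) * secondDiff h u x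
    - g x - h ^ 2 / 12 * ((c / d) * centralDiff h g x + secondDiff h g x)| ≤ (K + 1) * h ^ 4
  rw [hoc_residual_eq hd.ne' (hu.of_le (by norm_num)) hode]
  calc _ ≤ _ := abs_hoc_residual_le hd eu6 eu5 eu4 eg3 eg4
    _ = K * h ^ 4 := by ring
    _ ≤ (K + 1) * h ^ 4 := by gcongr; linarith
end

section
/- Splitting consistency of the Hundsdorfer–Verwer scheme for commuting linear operators: let F₀, F₁, F₂ be commuting linear maps on a finite-dimensional real vector space, F = F₀+F₁+F₂, θ = σ = 1/2, τ > 0. Define Y⁰ = U + τF(U), Y¹ = (I−θτF₁)⁻¹(Y⁰ − θτF₁U), Y² = (I−θτF₂)⁻¹(Y¹ − θτF₂U), Ỹ⁰ = Y⁰ + στ(F(Y²)−F(U)), Ỹ¹ = (I−θτF₁)⁻¹(Ỹ⁰ − θτF₁Y²), Ỹ² = (I−θτF₂)⁻¹(Ỹ¹ − θτF₂Y²), assuming the inverses exist. Then Ỹ² = U + τF(U) + (τ²/2)F²(U) + O(τ³) as τ → 0, i.e. the scheme matches exp(τF)U to second order. -/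
set_option maxHeartbeats 1000000

/-- Second-order consistency of the Hundsdorfer–Verwer splitting scheme for
    commuting linear operators, with θ = σ = 1/2. -/
theorem hv_splitting_second_order
    {V : Type*} [NormedAddCommGroup V] [NormedSpace ℝ V] [FiniteDimensional ℝ V]
    (F0 F1 F2 : V →ₗ[ℝ] V)
    (h01 : F0 ∘ₗ F1 = F1 ∘ₗ F0) (h02 : F0 ∘ₗ F2 = F2 ∘ₗ F0)
    (h12 : F1 ∘ₗ F2 = F2 ∘ₗ F1)
    (U : V) :
    ∃ C : ℝ, 0 ≤ C ∧ ∃ τ0 : ℝ, 0 < τ0 ∧ ∀ τ : ℝ, 0 < τ → τ < τ0 →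
      ∀ G1 G2 : V →ₗ[ℝ] V,
        G1 ∘ₗ (LinearMap.id - (τ/2) • F1) = LinearMap.id →
        (LinearMap.id - (τ/2) • F1) ∘ₗ G1 = LinearMap.id →
        G2 ∘ₗ (LinearMap.id - (τ/2) • F2) = LinearMap.id →
        (LinearMap.id - (τ/2) • F2) ∘ₗ G2 = LinearMap.id →
        (let F : V →ₗ[ℝ] V := F0 + F1 + F2
         let Y0 : V := U + τ • F U
         let Y1 : V := G1 (Y0 - (τ/2) • F1 U)
         let Y2 : V := G2 (Y1 - (τ/2) • F2 U)
         let Yt0 : V := Y0 + (τ/2) • (F Y2 - F U)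
         let Yt1 : V := G1 (Yt0 - (τ/2) • F1 Y2)
         let Yt2 : V := G2 (Yt1 - (τ/2) • F2 Y2)
         ‖Yt2 - (U + τ • F U + (τ^2/2) • F (F U))‖ ≤ C * τ ^ 3) := by
  have cc01 : ∀ x : V, F1 (F0 x) = F0 (F1 x) := fun x => (LinearMap.congr_fun h01 x).symm
  have cc02 : ∀ x : V, F2 (F0 x) = F0 (F2 x) := fun x => (LinearMap.congr_fun h02 x).symm
  have cc12 : ∀ x : V, F2 (F1 x) = F1 (F2 x) := fun x => (LinearMap.congr_fun h12 x).symm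
  set N1 : ℝ := ‖LinearMap.toContinuousLinearMap F1‖ with hN1def
  set N2 : ℝ := ‖LinearMap.toContinuousLinearMap F2‖ with hN2def
  have hN1 : ∀ x : V, ‖F1 x‖ ≤ N1 * ‖x‖ := by
    intro x
    have h := (LinearMap.toContinuousLinearMap F1).le_opNorm x
    simpa [hN1def] using h
  have hN2 : ∀ x : V, ‖F2 x‖ ≤ N2 * ‖x‖ := by
    intro x
    have h := (LinearMap.toContinuousLinearMap F2).le_opNorm x
    simpa [hN2def] using h
  have hN1nn : 0 ≤ N1 := norm_nonneg _
  have hN2nn : 0 ≤ N2 := norm_nonneg _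
  set w0 : V := ((1/4 : ℝ)) • F2 (F2 (F2 (U))) + ((3/4 : ℝ)) • F1 (F2 (F2 (U))) + ((3/4 : ℝ)) • F1 (F1 (F2 (U))) + ((1/4 : ℝ)) • F1 (F1 (F1 (U))) + ((3/4 : ℝ)) • F0 (F2 (F2 (U))) + ((3/2 : ℝ)) • F0 (F1 (F2 (U))) + ((3/4 : ℝ)) • F0 (F1 (F1 (U))) + ((1/2 : ℝ)) • F0 (F0 (F2 (U))) + ((1/2 : ℝ)) • F0 (F0 (F1 (U))) with hw0
  set w1 : V := ((-1/8 : ℝ)) • F2 (F2 (F2 (F2 (U)))) + ((-1/2 : ℝ)) • F1 (F2 (F2 (F2 (U)))) + ((-3/4 : ℝ)) • F1 (F1 (F2 (F2 (U)))) + ((-1/2 : ℝ)) • F1 (F1 (F1 (F2 (U)))) + ((-1/8 : ℝ)) • F1 (F1 (F1 (F1 (U)))) + ((-1/4 : ℝ)) • F0 (F2 (F2 (F2 (U)))) + ((-1/1 : ℝ)) • F0 (F1 (F2 (F2 (U)))) + ((-1/1 : ℝ)) • F0 (F1 (F1 (F2 (U)))) + ((-1/4 : ℝ)) • F0 (F1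 (F1 (F1 (U)))) + ((-1/8 : ℝ)) • F0 (F0 (F2 (F2 (U)))) + ((-1/2 : ℝ)) • F0 (F0 (F1 (F2 (U)))) + ((-1/8 : ℝ)) • F0 (F0 (F1 (F1 (U)))) with hw1
  set w2 : V := ((1/8 : ℝ)) • F1 (F2 (F2 (F2 (F2 (U))))) + ((5/16 : ℝ)) • F1 (F1 (F2 (F2 (F2 (U))))) + ((5/16 : ℝ)) • F1 (F1 (F1 (F2 (F2 (U))))) + ((1/8 : ℝ)) • F1 (F1 (F1 (F1 (F2 (U))))) + ((1/4 : ℝ)) • F0 (F1 (F2 (F2 (F2 (U))))) + ((7/16 : ℝ)) • F0 (F1 (F1 (F2 (F2 (U))))) + ((1/4 : ℝ)) • F0 (F1 (F1 (F1 (F2 (U))))) + ((1/8 : ℝ)) • F0 (F0 (F1 (F2 (F2 (U))))) + ((1/8 : ℝ)) • F0 (F0 (F1 (F1 (F2 (U))))) with hw2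
  set w3 : V := ((-1/32 : ℝ)) • F1 (F1 (F2 (F2 (F2 (F2 (U)))))) + ((-1/16 : ℝ)) • F1 (F1 (F1 (F2 (F2 (F2 (U)))))) + ((-1/32 : ℝ)) • F1 (F1 (F1 (F1 (F2 (F2 (U)))))) + ((-1/16 : ℝ)) • F0 (F1 (F1 (F2 (F2 (F2 (U)))))) + ((-1/16 : ℝ)) • F0 (F1 (F1 (F1 (F2 (F2 (U)))))) + ((-1/32 : ℝ)) • F0 (F0 (F1 (F1 (F2 (F2 (U)))))) with hw3
  refine ⟨16 * (‖w0‖ + ‖w1‖ + ‖w2‖ + ‖w3‖), by positivity,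
    min 1 (1/(1+N1+N2)), lt_min one_pos (by positivity), ?_⟩
  intro τ hτ hτ0 G1 G2 hg1 hg1' hg2 hg2'
  intro F Y0 Y1 Y2 Yt0 Yt1 Yt2
  have hF : ∀ x : V, F x = F0 x + F1 x + F2 x := fun x => rfl
  have hτ1 : τ ≤ 1 := le_of_lt (lt_of_lt_of_le hτ0 (min_le_left _ _))
  have hpos : (0:ℝ) < 1 + N1 + N2 := by positivity
  have hτN : τ * (1 + N1 + N2) < 1 := by
    have h := lt_of_lt_of_le hτ0 (min_le_right _ _)
    rwa [lt_div_iff₀ hpos] at h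
  have hτN1 : τ * N1 ≤ 1 := by nlinarith
  have hτN2 : τ * N2 ≤ 1 := by nlinarith
  have cG1 : ∀ x : V, G1 x - (τ/2) • F1 (G1 x) = x := by
    intro x
    have h := LinearMap.congr_fun hg1' x
    simpa [LinearMap.comp_apply, LinearMap.sub_apply, LinearMap.smul_apply] using h
  have cG2 : ∀ x : V, G2 x - (τ/2) • F2 (G2 x) = x := by
    intro x
    have h := LinearMap.congr_fun hg2' x
    simpa [LinearMap.comp_apply, LinearMap.sub_apply, LinearMap.smul_apply] using h
  have cA1 : ∀ x : V, G1 (x - (τ/2) • F1 x) = x := by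
    intro x
    have h := LinearMap.congr_fun hg1 x
    simpa [LinearMap.comp_apply, LinearMap.sub_apply, LinearMap.smul_apply] using h
  have cA2 : ∀ x : V, G2 (x - (τ/2) • F2 x) = x := by
    intro x
    have h := LinearMap.congr_fun hg2 x
    simpa [LinearMap.comp_apply, LinearMap.sub_apply, LinearMap.smul_apply] using h
  have bG1 : ∀ x : V, ‖G1 x‖ ≤ 2 * ‖x‖ := by
    intro x
    have h : G1 x = x + (τ/2) • F1 (G1 x) := by
      have := cG1 x; linear_combination (norm := module) this
    have hb : ‖G1 x‖ ≤ ‖x‖ + (τ/2) * ‖F1 (G1 x)‖ := by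
      calc ‖G1 x‖ = ‖x + (τ/2) • F1 (G1 x)‖ := by rw [← h]
        _ ≤ ‖x‖ + ‖(τ/2) • F1 (G1 x)‖ := norm_add_le _ _
        _ = ‖x‖ + (τ/2) * ‖F1 (G1 x)‖ := by
            rw [norm_smul, Real.norm_eq_abs, abs_of_pos (by linarith)]
    have hc := hN1 (G1 x)
    have hgn : (0:ℝ) ≤ ‖G1 x‖ := norm_nonneg _
    have h5 : (τ/2) * ‖F1 (G1 x)‖ ≤ (τ/2) * (N1 * ‖G1 x‖) :=
      mul_le_mul_of_nonneg_left hc (by linarith)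
    have h6 : τ * N1 * ‖G1 x‖ ≤ 1 * ‖G1 x‖ := mul_le_mul_of_nonneg_right hτN1 hgn
    nlinarith
  have bG2 : ∀ x : V, ‖G2 x‖ ≤ 2 * ‖x‖ := by
    intro x
    have h : G2 x = x + (τ/2) • F2 (G2 x) := by
      have := cG2 x; linear_combination (norm := module) this
    have hb : ‖G2 x‖ ≤ ‖x‖ + (τ/2) * ‖F2 (G2 x)‖ := by
      calc ‖G2 x‖ = ‖x + (τ/2) • F2 (G2 x)‖ := by rw [← h]
        _ ≤ ‖x‖ + ‖(τ/2) • F2 (G2 x)‖ := norm_add_le _ _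
        _ = ‖x‖ + (τ/2) * ‖F2 (G2 x)‖ := by
            rw [norm_smul, Real.norm_eq_abs, abs_of_pos (by linarith)]
    have hc := hN2 (G2 x)
    have hgn : (0:ℝ) ≤ ‖G2 x‖ := norm_nonneg _
    have h5 : (τ/2) * ‖F2 (G2 x)‖ ≤ (τ/2) * (N2 * ‖G2 x‖) :=
      mul_le_mul_of_nonneg_left hc (by linarith)
    have h6 : τ * N2 * ‖G2 x‖ ≤ 1 * ‖G2 x‖ := mul_le_mul_of_nonneg_right hτN2 hgn
    nlinarith
  -- basic scheme equations, with definitions unfolded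
  have e1 : Y1 - (τ/2) • F1 Y1 = U + τ • (F0 U + F1 U + F2 U) - (τ/2) • F1 U :=
    cG1 (Y0 - (τ/2) • F1 U)
  have e2 : Y2 - (τ/2) • F2 Y2 = Y1 - (τ/2) • F2 U := cG2 _
  have e3 : Yt1 - (τ/2) • F1 Yt1 =
      (U + τ • (F0 U + F1 U + F2 U)) +
        (τ/2) • ((F0 Y2 + F1 Y2 + F2 Y2) - (F0 U + F1 U + F2 U)) - (τ/2) • F1 Y2 :=
    cG1 (Yt0 - (τ/2) • F1 Y2)
  have e4 : Yt2 - (τ/2) • F2 Yt2 = Yt1 - (τ/2) • F2 Y2 := cG2 _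
  have e2f1 := congrArg (fun v : V => F1 v) e2
  simp only [map_sub, map_add, map_smul, cc01, cc02, cc12] at e2f1
  have star : Y2 - (τ/2) • F1 Y2 - (τ/2) • F2 Y2 + (τ^2/4) • F1 (F2 Y2) =
      U + τ • (F0 U + F1 U + F2 U) - (τ/2) • F1 U - (τ/2) • F2 U + (τ^2/4) • F1 (F2 U) := by
    linear_combination (norm := module) e2 - (τ/2) • e2f1 + e1
  have e4f1 := congrArg (fun v : V => F1 v) e4
  simp only [map_sub, map_add, map_smul, cc01, cc02, cc12] at e4f1
  have s2 : Yt2 - (τ/2) • F1 Yt2 - (τ/2) • F2 Yt2 + (τ^2/4) • F1 (F2 Yt2) =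
      U + (τ/2) • (F0 U + F1 U + F2 U) + (τ/2) • F0 Y2 + (τ^2/4) • F1 (F2 Y2) := by
    linear_combination (norm := module) e4 - (τ/2) • e4f1 + e3
  have s2f1 := congrArg (fun v : V => F1 v) s2
  simp only [map_sub, map_add, map_smul, cc01, cc02, cc12] at s2f1
  have s2f2 := congrArg (fun v : V => F2 v) s2
  simp only [map_sub, map_add, map_smul, cc01, cc02, cc12] at s2f2
  have s2f12 := congrArg (fun v : V => F1 (F2 v)) s2
  simp only [map_sub, map_add, map_smul, cc01, cc02, cc12] at s2f12
  have starf0 := congrArg (fun v : V => F0 v) star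
  simp only [map_sub, map_add, map_smul, cc01, cc02, cc12] at starf0
  have starf12 := congrArg (fun v : V => F1 (F2 v)) star
  simp only [map_sub, map_add, map_smul, cc01, cc02, cc12] at starf12
  set D : V := Yt2 - (U + τ • F U + (τ^2/2) • F (F U)) with hD
  set D1 : V := D - (τ/2) • F1 D - (τ/2) • F2 D + (τ^2/4) • F1 (F2 D) with hD1
  have base : D1 - (τ/2) • F1 D1 - (τ/2) • F2 D1 + (τ^2/4) • F1 (F2 D1) =
      τ^3 • (w0 + τ • w1 + τ^2 • w2 + τ^3 • w3) := by
    rw [hD1, hD, hw0, hw1, hw2, hw3]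
    simp only [hF, map_sub, map_add, map_smul, cc01, cc02, cc12]
    linear_combination (norm := module)
      s2 - (τ/2) • s2f1 - (τ/2) • s2f2 + (τ^2/4) • s2f12 +
        (τ/2) • starf0 + (τ^2/4) • starf12
  have undo : ∀ z : V,
      G2 (G1 (z - (τ/2) • F1 z - (τ/2) • F2 z + (τ^2/4) • F1 (F2 z))) = z := by
    intro z
    have hsplit : z - (τ/2) • F1 z - (τ/2) • F2 z + (τ^2/4) • F1 (F2 z) =
        (z - (τ/2) • F2 z) - (τ/2) • F1 (z - (τ/2) • F2 z) := by
      simp only [map_sub, map_add, map_smul]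
      module
    rw [hsplit, cA1, cA2]
  have u1 := undo D1
  rw [base] at u1
  have u2 := undo D
  rw [← hD1] at u2
  rw [← u1] at u2
  -- now u2 : G2 (G1 (G2 (G1 (τ^3 • W)))) = D
  have hWn : ‖w0 + τ • w1 + τ^2 • w2 + τ^3 • w3‖ ≤ ‖w0‖ + ‖w1‖ + ‖w2‖ + ‖w3‖ := by
    have h1 : ‖w0 + τ • w1 + τ^2 • w2 + τ^3 • w3‖ ≤
        ‖w0‖ + ‖τ • w1‖ + ‖τ^2 • w2‖ + ‖τ^3 • w3‖ := by
      calc ‖w0 + τ • w1 + τ^2 • w2 + τ^3 • w3‖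
          ≤ ‖w0 + τ • w1 + τ^2 • w2‖ + ‖τ^3 • w3‖ := norm_add_le _ _
        _ ≤ (‖w0 + τ • w1‖ + ‖τ^2 • w2‖) + ‖τ^3 • w3‖ := by
            have := norm_add_le (w0 + τ • w1) (τ^2 • w2); linarith
        _ ≤ (‖w0‖ + ‖τ • w1‖ + ‖τ^2 • w2‖) + ‖τ^3 • w3‖ := by
            have := norm_add_le w0 (τ • w1); linarith
    have hs1 : ‖τ • w1‖ ≤ ‖w1‖ := by
      rw [norm_smul, Real.norm_eq_abs, abs_of_pos hτ]
      nlinarith [norm_nonneg w1, hτ1, hτ.le]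
    have hs2 : ‖τ^2 • w2‖ ≤ ‖w2‖ := by
      rw [norm_smul, Real.norm_eq_abs, abs_of_pos (pow_pos hτ 2)]
      have hp : τ ^ 2 ≤ 1 := pow_le_one₀ hτ.le hτ1
      nlinarith [norm_nonneg w2]
    have hs3 : ‖τ^3 • w3‖ ≤ ‖w3‖ := by
      rw [norm_smul, Real.norm_eq_abs, abs_of_pos (pow_pos hτ 3)]
      have hp : τ ^ 3 ≤ 1 := pow_le_one₀ hτ.le hτ1
      nlinarith [norm_nonneg w3]
    linarith
  have hchain : ‖D‖ ≤ 16 * ‖τ^3 • (w0 + τ • w1 + τ^2 • w2 + τ^3 • w3)‖ := by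
    rw [← u2]
    set E : V := τ^3 • (w0 + τ • w1 + τ^2 • w2 + τ^3 • w3) with hE
    have b1 := bG1 E
    have b2 := bG2 (G1 E)
    have b3 := bG1 (G2 (G1 E))
    have b4 := bG2 (G1 (G2 (G1 E)))
    linarith
  have hEn : ‖τ^3 • (w0 + τ • w1 + τ^2 • w2 + τ^3 • w3)‖ =
      τ^3 * ‖w0 + τ • w1 + τ^2 • w2 + τ^3 • w3‖ := by
    rw [norm_smul, Real.norm_eq_abs, abs_of_pos (pow_pos hτ 3)]
  rw [hEn] at hchain
  have hpow : (0:ℝ) < τ^3 := pow_pos hτ 3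
  calc ‖D‖ ≤ 16 * (τ^3 * ‖w0 + τ • w1 + τ^2 • w2 + τ^3 • w3‖) := hchain
    _ ≤ 16 * (τ^3 * (‖w0‖ + ‖w1‖ + ‖w2‖ + ‖w3‖)) := by nlinarith
    _ = 16 * (‖w0‖ + ‖w1‖ + ‖w2‖ + ‖w3‖) * τ^3 := by ring
end
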